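/- arXiv:2511.16328 — 2 statements merged into one kernel-verified Lean document; each statement's English description precedes it below -/
import Mathlib

section
/- Let ρ be a finite nonnegative measure supported in [0, E₀] with ρ((0,E₀]) > 0, and define ℰ_n = ∫₀^{E₀} (1 - E/E₀)^n dρ(E). If ρ has density equal to c(E - Δ)^r on (Δ, E₀] near Δ (with 0 ≤ Δ < E₀, r > -1, c > 0) and vanishes on [0, Δ), then ℱ_n := ℰ_{n-1}/ℰ_n satisfies ℱ_n → 1/(1 - Δ/E₀) as n → ∞. -/
/-!
The moments are explicit. Substituting `E = Δ + (E₀ - Δ) s` gives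
`ℰ_n = c (E₀ - Δ)^(r+1) ((E₀ - Δ)/E₀)^n B(r+1, n+1)`, so
`ℱ_{n+1} = E₀/(E₀ - Δ) · B(r+1, n+1)/B(r+1, n+2) = E₀/(E₀ - Δ) · (r+n+2)/(n+1)`.
-/

open MeasureTheory Filter Topology Set
open scoped Nat

lemma integral_rpow_mul_one_sub_pow {r : ℝ} (hr : -1 < r) (n : ℕ) :
    ∫ s in (0 : ℝ)..1, s ^ r * (1 - s) ^ n = n ! / ∏ j ∈ Finset.range (n + 1), (r + 1 + j) := by
  have hu : 0 < ((r : ℂ) + 1).re := by simpa using neg_lt_iff_pos_add.mp hr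
  have hbeta : Complex.betaIntegral ((r : ℂ) + 1) ((n : ℂ) + 1)
      = ((∫ s in (0 : ℝ)..1, s ^ r * (1 - s) ^ n : ℝ) : ℂ) := by
    rw [Complex.betaIntegral, ← intervalIntegral.integral_ofReal]
    refine intervalIntegral.integral_congr fun s hs => ?_
    rw [uIcc_of_le zero_le_one] at hs
    simp only [add_sub_cancel_right, ← Complex.ofReal_cpow hs.1, Complex.cpow_natCast]
    push_cast
    rfl
  have h := Complex.betaIntegral_eval_nat_add_one_right hu n
  rw [hbeta] at h
  exact_mod_cast h

lemma integral_rpow_mul_one_sub_pow_pos {r : ℝ} (hr : -1 < r) (n : ℕ) :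
    0 < ∫ s in (0 : ℝ)..1, s ^ r * (1 - s) ^ n := by
  rw [integral_rpow_mul_one_sub_pow hr]
  exact div_pos (by positivity) (Finset.prod_pos fun j _ => by linarith [j.cast_nonneg (α := ℝ)])

lemma integral_rpow_mul_one_sub_pow_succ {r : ℝ} (hr : -1 < r) (n : ℕ) :
    ∫ s in (0 : ℝ)..1, s ^ r * (1 - s) ^ (n + 1)
      = (n + 1) / (r + n + 2) * ∫ s in (0 : ℝ)..1, s ^ r * (1 - s) ^ n := by
  have hrn : r + n + 2 ≠ 0 := by linarith [n.cast_nonneg (α := ℝ)]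
  have hP : ∏ j ∈ Finset.range (n + 1), (r + 1 + j) ≠ 0 :=
    Finset.prod_ne_zero_iff.mpr fun j _ => by linarith [j.cast_nonneg (α := ℝ)]
  rw [integral_rpow_mul_one_sub_pow hr, integral_rpow_mul_one_sub_pow hr, Finset.prod_range_succ,
    Nat.factorial_succ]
  push_cast
  rw [show r + 1 + ((n : ℝ) + 1) = r + n + 2 by ring]
  field_simp

lemma tendsto_integral_rpow_mul_one_sub_pow_div_succ {r : ℝ} (hr : -1 < r) :
    Tendsto (fun n : ℕ => (∫ s in (0 : ℝ)..1, s ^ r * (1 - s) ^ n)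
      / ∫ s in (0 : ℝ)..1, s ^ r * (1 - s) ^ (n + 1)) atTop (𝓝 1) := by
  have h := (tendsto_one_div_add_atTop_nhds_zero_nat (𝕜 := ℝ)).const_mul (r + 1) |>.const_add 1
  rw [mul_zero, add_zero] at h
  refine h.congr fun n => ?_
  have hB := (integral_rpow_mul_one_sub_pow_pos hr n).ne'
  rw [integral_rpow_mul_one_sub_pow_succ hr]
  have hrn : r + n + 2 ≠ 0 := by linarith [n.cast_nonneg (α := ℝ)]
  field_simp
  ring

lemma integral_sub_rpow_mul_sub_pow {a b : ℝ} (hab : a < b) (r : ℝ) (n : ℕ) :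
    ∫ x in a..b, (x - a) ^ r * (b - x) ^ n
      = (b - a) ^ (r + 1) * (b - a) ^ n * ∫ s in (0 : ℝ)..1, s ^ r * (1 - s) ^ n := by
  have hL : 0 < b - a := sub_pos.mpr hab
  have hsub := intervalIntegral.integral_comp_mul_add (fun x => (x - a) ^ r * (b - x) ^ n)
    hL.ne' a (a := 0) (b := 1)
  simp only [mul_zero, zero_add, mul_one, sub_add_cancel] at hsub
  have hscale : ∀ s ∈ uIcc (0 : ℝ) 1, ((b - a) * s + a - a) ^ r * (b - ((b - a) * s + a)) ^ n
      = ((b - a) ^ r * (b - a) ^ n) * (s ^ r * (1 - s) ^ n) := by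
    intro s hs
    rw [uIcc_of_le zero_le_one] at hs
    rw [add_sub_cancel_right, Real.mul_rpow hL.le hs.1,
      show b - ((b - a) * s + a) = (b - a) * (1 - s) by ring, mul_pow]
    ring
  rw [intervalIntegral.integral_congr hscale, intervalIntegral.integral_const_mul, smul_eq_mul,
    eq_inv_mul_iff_mul_eq₀ hL.ne'] at hsub
  rw [← hsub, Real.rpow_add hL, Real.rpow_one]
  ring

lemma integral_withDensity_restrict_Ioc {a b : ℝ} (hab : a ≤ b) {g : ℝ → ℝ} (hg : Measurable g)
    (hg0 : ∀ x ∈ Ioc a b, 0 ≤ g x) (f : ℝ → ℝ) :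
    ∫ x, f x ∂(volume.restrict (Ioc a b)).withDensity (fun x => ENNReal.ofReal (g x))
      = ∫ x in a..b, g x * f x := by
  rw [integral_withDensity_eq_integral_toReal_smul (by fun_prop)
      (.of_forall fun _ => ENNReal.ofReal_lt_top),
    intervalIntegral.integral_of_le hab]
  refine setIntegral_congr_fun measurableSet_Ioc fun x hx => ?_
  rw [ENNReal.toReal_ofReal (hg0 x hx), smul_eq_mul]

lemma integral_one_sub_div_pow_withDensity_rpow {E₀ Δ c : ℝ} (hE₀ : E₀ ≠ 0) (hΔ : Δ < E₀)
    (hc : 0 ≤ c) (r : ℝ) (n : ℕ) :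
    ∫ E, (1 - E / E₀) ^ n ∂(volume.restrict (Ioc Δ E₀)).withDensity
        (fun E => ENNReal.ofReal (c * (E - Δ) ^ r))
      = c * (E₀ - Δ) ^ (r + 1) * ((E₀ - Δ) / E₀) ^ n
          * ∫ s in (0 : ℝ)..1, s ^ r * (1 - s) ^ n := by
  have hdens : ∀ E ∈ Ioc Δ E₀, 0 ≤ c * (E - Δ) ^ r :=
    fun E hE => mul_nonneg hc (Real.rpow_nonneg (sub_nonneg.mpr hE.1.le) r)
  have hfactor : ∀ E : ℝ, c * (E - Δ) ^ r * (1 - E / E₀) ^ n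
      = c * E₀⁻¹ ^ n * ((E - Δ) ^ r * (E₀ - E) ^ n) := by
    intro E
    rw [show 1 - E / E₀ = E₀⁻¹ * (E₀ - E) by field_simp, mul_pow]
    ring
  rw [integral_withDensity_restrict_Ioc hΔ.le (by fun_prop) hdens, funext hfactor,
    intervalIntegral.integral_const_mul, integral_sub_rpow_mul_sub_pow hΔ, div_pow,
    div_eq_mul_inv _ (E₀ ^ n), ← inv_pow]
  ring

theorem stmt_6_general (E₀ Δ c r : ℝ) (hE₀ : 0 < E₀) (hΔ : Δ < E₀)
    (hr : -1 < r) (hc : 0 < c)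
    (ρ : Measure ℝ)
    (hρ : ρ = (volume.restrict (Set.Ioc Δ E₀)).withDensity
      (fun E => ENNReal.ofReal (c * (E - Δ) ^ r))) :
    Tendsto
      (fun n : ℕ => (∫ E, (1 - E / E₀) ^ (n - 1) ∂ρ) / (∫ E, (1 - E / E₀) ^ n ∂ρ))
      atTop (nhds (1 / (1 - Δ / E₀))) := by
  subst hρ
  have hL : 0 < E₀ - Δ := sub_pos.mpr hΔ
  have hlim : 1 / (1 - Δ / E₀) = E₀ / (E₀ - Δ) * 1 := by field_simp
  rw [← tendsto_add_atTop_iff_nat 1, hlim]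
  simp only [add_tsub_cancel_right, integral_one_sub_div_pow_withDensity_rpow hE₀.ne' hΔ hc.le]
  refine ((tendsto_integral_rpow_mul_one_sub_pow_div_succ hr).const_mul _).congr fun n => ?_
  have hB := (integral_rpow_mul_one_sub_pow_pos hr n).ne'
  rw [pow_succ]
  field_simp

/-- For a density of states `ρ` with density `c(E-Δ)^r` on
`(Δ, E₀]` (vanishing below `Δ`), the moment ratio
`ℱ_n = ℰ_{n-1}/ℰ_n` with `ℰ_n = ∫ (1-E/E₀)^n dρ` converges to `1/(1-Δ/E₀)`. -/
theorem stmt_6 (E₀ Δ c r : ℝ) (hE₀ : 0 < E₀) (hΔ0 : 0 ≤ Δ) (hΔ : Δ < E₀)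
    (hr : -1 < r) (hc : 0 < c)
    (ρ : Measure ℝ)
    (hρ : ρ = (volume.restrict (Set.Ioc Δ E₀)).withDensity
      (fun E => ENNReal.ofReal (c * (E - Δ) ^ r))) :
    Tendsto
      (fun n : ℕ => (∫ E, (1 - E / E₀) ^ (n - 1) ∂ρ) / (∫ E, (1 - E / E₀) ^ n ∂ρ))
      atTop (nhds (1 / (1 - Δ / E₀))) :=
  stmt_6_general E₀ Δ c r hE₀ hΔ hr hc ρ hρ
end

section
/- For the {3,q} lattice layer-counting recursion s(0)=1, s(1)=q, s(2)=q(q-4), s(n+1)=(q-4)s(n)-s(n-1) (n≥2), q ≥ 7, with edge increments b(n+1) = 2s(n+1) + s(n), the boundary-to-bulk ratio s(n)/Σ_{k=0}^{n} s(k) converges to a strictly positive limit 1 - 1/λ, where λ = ((q-4)+√((q-4)²-4))/2. -/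
/-!
Writing `t = q - 4` and `λ` for the larger root of `x² - t x + 1`, the other root is `λ⁻¹`, so
`s (n + 1) = c (λ^(n+1) - λ^-(n+1))` with `c = q / (λ - λ⁻¹) > 0`, whence `s n / λ^n → c`.
For any sequence with `s n / λ^n → c ≠ 0` and `λ > 1`, dominated convergence applied to
`(∑_{k ≤ n} s k) / λ^n = ∑_{j ≤ n} (s (n - j) / λ^(n - j)) λ^-j` gives the limit `c λ / (λ - 1)`,
so `s n / ∑_{k ≤ n} s k → 1 - 1/λ`.
-/

open Filter Topology Finset

theorem eq_mul_pow_add_mul_pow_of_recurrence {R : Type*} [CommRing R] {u : ℕ → R} {L M A B : R}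
    (hrec : ∀ n, u (n + 2) = (L + M) * u (n + 1) - L * M * u n)
    (h0 : u 0 = A + B) (h1 : u 1 = A * L + B * M) (n : ℕ) :
    u n = A * L ^ n + B * M ^ n := by
  induction n using Nat.twoStepInduction with
  | zero => simpa using h0
  | one => simpa using h1
  | more n ih₀ ih₁ => rw [hrec, ih₀, ih₁]; ring

theorem tendsto_div_pow_of_eventually_eq {u : ℕ → ℝ} {L M A B : ℝ} (hML : |M| < L)
    (hu : ∀ᶠ n in atTop, u n = A * L ^ n + B * M ^ n) :
    Tendsto (fun n => u n / L ^ n) atTop (𝓝 A) := by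
  have hL : 0 < L := (abs_nonneg M).trans_lt hML
  have hgeom : Tendsto (fun n => (M / L) ^ n) atTop (𝓝 0) :=
    tendsto_pow_atTop_nhds_zero_of_abs_lt_one <| by
      rwa [abs_div, abs_of_pos hL, div_lt_one hL]
  have hlim : Tendsto (fun n => A + B * (M / L) ^ n) atTop (𝓝 A) := by
    simpa using (hgeom.const_mul B).const_add A
  refine hlim.congr' ?_
  filter_upwards [hu] with n hn
  rw [hn, div_pow]
  field_simp

theorem tendsto_sum_range_div_pow {s : ℕ → ℝ} {L A : ℝ} (hL : 1 < L)
    (h : Tendsto (fun n => s n / L ^ n) atTop (𝓝 A)) :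
    Tendsto (fun n => (∑ k ∈ range (n + 1), s k) / L ^ n) atTop (𝓝 (A * (1 - L⁻¹)⁻¹)) := by
  set r : ℕ → ℝ := fun n => s n / L ^ n
  have hL0 : L ≠ 0 := by positivity
  have hinv₀ : 0 ≤ L⁻¹ := by positivity
  have hinv₁ : L⁻¹ < 1 := inv_lt_one_of_one_lt₀ hL
  obtain ⟨C, hC⟩ := isBounded_iff_forall_norm_le.1 (Metric.isBounded_range_of_tendsto r h)
  let f : ℕ → ℕ → ℝ := fun n j => if j ≤ n then r (n - j) * L⁻¹ ^ j else 0
  have hsum : ∀ n, (∑ k ∈ range (n + 1), s k) / L ^ n = ∑' j, f n j := by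
    intro n
    rw [tsum_eq_sum (s := range (n + 1)) fun j hj => if_neg (by simpa [Nat.lt_succ_iff] using hj),
      ← sum_range_reflect, sum_div]
    refine sum_congr rfl fun j hj => ?_
    have hjn : j ≤ n := Nat.lt_succ_iff.1 (mem_range.1 hj)
    rw [if_pos hjn, add_tsub_cancel_right, inv_pow, ← div_eq_mul_inv, div_div, ← pow_add,
      Nat.sub_add_cancel hjn]
  have hpointwise : ∀ j, Tendsto (fun n => f n j) atTop (𝓝 (A * L⁻¹ ^ j)) := by
    intro j
    refine ((h.comp (tendsto_sub_atTop_nat j)).mul_const (L⁻¹ ^ j)).congr' ?_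
    filter_upwards [eventually_ge_atTop j] with n hn
    simp [f, r, hn]
  have hbound : ∀ n j, ‖f n j‖ ≤ C * L⁻¹ ^ j := by
    intro n j
    by_cases hjn : j ≤ n
    · simp only [f, if_pos hjn, norm_mul, norm_pow, Real.norm_of_nonneg hinv₀]
      gcongr
      exact hC _ ⟨n - j, rfl⟩
    · simp only [f, if_neg hjn, norm_zero]
      have := (norm_nonneg (r 0)).trans (hC _ ⟨0, rfl⟩)
      positivity
  have hlim := tendsto_tsum_of_dominated_convergence
    ((summable_geometric_of_lt_one hinv₀ hinv₁).mul_left C) hpointwise (.of_forall hbound)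
  rw [tsum_mul_left, tsum_geometric_of_lt_one hinv₀ hinv₁] at hlim
  simpa only [hsum] using hlim

theorem tendsto_div_sum_range_of_tendsto_div_pow {s : ℕ → ℝ} {L A : ℝ} (hL : 1 < L) (hA : A ≠ 0)
    (h : Tendsto (fun n => s n / L ^ n) atTop (𝓝 A)) :
    Tendsto (fun n => s n / ∑ k ∈ range (n + 1), s k) atTop (𝓝 (1 - 1 / L)) := by
  have hL0 : L ≠ 0 := by positivity
  have hgeom : 1 - L⁻¹ ≠ 0 := sub_ne_zero.2 (inv_lt_one_of_one_lt₀ hL).ne'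
  have hlim := h.div (tendsto_sum_range_div_pow hL h) (mul_ne_zero hA (inv_ne_zero hgeom))
  convert hlim using 2 with n
  · rw [Pi.div_apply, div_div_div_cancel_right₀ (pow_ne_zero n hL0)]
  · field_simp

/-- The larger root of `x² - t x + 1`. -/
noncomputable def largerRoot (t : ℝ) : ℝ := (t + √(t ^ 2 - 4)) / 2

theorem one_lt_largerRoot {t : ℝ} (ht : 2 < t) : 1 < largerRoot t := by
  have := Real.sqrt_nonneg (t ^ 2 - 4)
  unfold largerRoot
  linarith

theorem largerRoot_add_inv {t : ℝ} (ht : 2 ≤ t) : largerRoot t + (largerRoot t)⁻¹ = t := by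
  have hsq : √(t ^ 2 - 4) ^ 2 = t ^ 2 - 4 := Real.sq_sqrt (by nlinarith)
  have hinv : (largerRoot t)⁻¹ = (t - √(t ^ 2 - 4)) / 2 :=
    inv_eq_of_mul_eq_one_right (by unfold largerRoot; linear_combination -hsq / 4)
  rw [hinv, largerRoot]
  ring

theorem stmt_13_general (q : ℝ) (hq : 7 ≤ q) (s : ℕ → ℝ)
    (h1 : s 1 = q) (h2 : s 2 = q * (q - 4))
    (hrec : ∀ n, 2 ≤ n → s (n + 1) = (q - 4) * s n - s (n - 1)) :
    Tendsto (fun n => s n / ∑ k ∈ Finset.range (n + 1), s k) atTop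
        (nhds (1 - 1 / (((q - 4) + Real.sqrt ((q - 4) ^ 2 - 4)) / 2))) ∧
      0 < 1 - 1 / (((q - 4) + Real.sqrt ((q - 4) ^ 2 - 4)) / 2) := by
  change Tendsto _ atTop (𝓝 (1 - 1 / largerRoot (q - 4))) ∧ 0 < 1 - 1 / largerRoot (q - 4)
  set L := largerRoot (q - 4)
  have hL : 1 < L := one_lt_largerRoot (by linarith)
  have hLt : L + L⁻¹ = q - 4 := largerRoot_add_inv (by linarith)
  have hLL : L * L⁻¹ = 1 := mul_inv_cancel₀ (by positivity)
  have hgap : 0 < L - L⁻¹ := by linarith [inv_lt_one_of_one_lt₀ hL]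
  set c := q / (L - L⁻¹)
  have hc : c * (L - L⁻¹) = q := div_mul_cancel₀ q hgap.ne'
  have hclosed (n : ℕ) : s (n + 1) = c * L * L ^ n + (-c * L⁻¹) * L⁻¹ ^ n := by
    refine eq_mul_pow_add_mul_pow_of_recurrence (u := fun n => s (n + 1)) (fun n => ?_) ?_ ?_ n
    · rw [hLt, hLL, one_mul]; exact hrec (n + 2) (by omega)
    · linear_combination h1 - hc
    · linear_combination h2 - (L + L⁻¹) * hc - q * hLt
  have hlim : Tendsto (fun n => s n / L ^ n) atTop (𝓝 c) := by
    refine tendsto_div_pow_of_eventually_eq (M := L⁻¹) (B := -c) ?_ ?_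
    · rw [abs_of_pos (by positivity)]; linarith
    · filter_upwards [eventually_ge_atTop 1] with n hn
      obtain ⟨m, rfl⟩ := Nat.exists_eq_add_of_le' hn
      rw [hclosed]; ring
  exact ⟨tendsto_div_sum_range_of_tendsto_div_pow hL (by positivity) hlim,
    sub_pos.2 ((div_lt_one (by positivity)).2 hL)⟩

/-- For the `{3,q}` layer-counting recursion (`q ≥ 7`) with edge
increments `b(n+1) = 2s(n+1) + s(n)`, the boundary-to-bulk ratio
`s(n)/Σ_{k=0}^n s(k)` converges to the strictly positive limit `1 - 1/λ`,
where `λ = ((q-4)+√((q-4)²-4))/2`. -/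
theorem stmt_13 (q : ℝ) (hq : 7 ≤ q) (s b : ℕ → ℝ)
    (h0 : s 0 = 1) (h1 : s 1 = q) (h2 : s 2 = q * (q - 4))
    (hrec : ∀ n, 2 ≤ n → s (n + 1) = (q - 4) * s n - s (n - 1))
    (hb : ∀ n, b (n + 1) = 2 * s (n + 1) + s n) :
    Tendsto (fun n => s n / ∑ k ∈ Finset.range (n + 1), s k) atTop
        (nhds (1 - 1 / (((q - 4) + Real.sqrt ((q - 4) ^ 2 - 4)) / 2))) ∧
      0 < 1 - 1 / (((q - 4) + Real.sqrt ((q - 4) ^ 2 - 4)) / 2) :=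
  stmt_13_general q hq s h1 h2 hrec
end
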